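/- Let X be an infinite locally finite extended metric space. Then X is amenable but not properly amenable if and only if X decomposes as X = Y₁ ⊔ Y₂ where Y₁ is a finite non-empty subset, Y₂ is non-amenable, and d(x,y) = ∞ for all x ∈ Y₁, y ∈ Y₂. -/

import Mathlib

open Set

/-- An extended metric space is locally finite if every set of finite diameter
(every closed ball of finite radius) is finite. -/
def LocallyFiniteEMS (X : Type*) [EMetricSpace X] : Prop :=
  ∀ (x : X) (R : ℝ), {y : X | edist x y ≤ ENNReal.ofReal R}.Finite

/-- The `R`-boundary of a set `F` in an extended metric space. -/
def rBoundary {X : Type*} [EMetricSpace X] (R : ℝ) (F : Set X) : Set X :=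
  {x : X | (∃ y ∈ F, edist x y ≤ ENNReal.ofReal R) ∧
           (∃ y ∉ F, edist x y ≤ ENNReal.ofReal R)}

/-- `F` is an `(R, ε)`-Følner set: finite, nonempty, with `|∂_R F| ≤ ε·|F|`. -/
def IsFolnerSet {X : Type*} [EMetricSpace X] (R ε : ℝ) (F : Set X) : Prop :=
  F.Finite ∧ F.Nonempty ∧ ((rBoundary R F).ncard : ℝ) ≤ ε * F.ncard

/-- Amenability of an extended metric space. -/
def Amenable (X : Type*) [EMetricSpace X] : Prop :=
  ∀ R > (0:ℝ), ∀ ε > (0:ℝ), ∃ F : Set X, IsFolnerSet R ε F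

/-- Proper amenability of an extended metric space. -/
def ProperlyAmenable (X : Type*) [EMetricSpace X] : Prop :=
  ∀ R > (0:ℝ), ∀ ε > (0:ℝ), ∀ A : Set X, A.Finite →
    ∃ F : Set X, IsFolnerSet R ε F ∧ A ⊆ F

/-- `t` is a partial translation with domain `A` and range `B`: a bijection from `A`
onto `B` whose graph is controlled, i.e. `sup_{x ∈ A} d(x, t x) < ∞`. -/
def IsPartialTranslation {X : Type*} [EMetricSpace X] (A B : Set X) (t : X → X) : Prop :=
  Set.BijOn t A B ∧ ∃ C : ℝ, ∀ x ∈ A, edist x (t x) ≤ ENNReal.ofReal C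

/-- A paradoxical decomposition of `X`: a partition `X = X₊ ⊔ X₋` together with partial
translations `t₊ : X → X₊`, `t₋ : X → X₋` defined on all of `X`. -/
def Paradoxical (X : Type*) [EMetricSpace X] : Prop :=
  ∃ (Xp Xm : Set X) (tp tm : X → X),
    Xp ∪ Xm = Set.univ ∧ Disjoint Xp Xm ∧
    IsPartialTranslation Set.univ Xp tp ∧ IsPartialTranslation Set.univ Xm tm

/-!
If `X` is not properly amenable, some finite set `A` lies in no `(R, ε)`-Følner set. Adding `A`
to a large `(R, ε/2)`-Følner set would produce one, so `(R, ε/2)`-Følner sets have at most `N`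
points. Every finite nonempty set with empty boundary at a scale `≥ R` is such a Følner set, and
amenability with ratio `< 1/(N+1)` produces these sets at every scale. As only finitely many
points lie in such sets at scale `R`, a compactness argument over the scales `R + n` yields a
point whose set of points at finite distance is finite. Hence the union `Y₁` of the finite
classes of "finite distance" is finite and nonempty, and the same argument run inside `Y₂ = Y₁ᶜ`
shows that `Y₂` is not amenable.

Conversely `Y₁` has empty boundary at every scale, and a Følner set of `X` containing `Y₁` and a
point of `Y₂` restricts to a Følner set of `Y₂` with ratio worse by at most the factor
`|Y₁| + 1`.
-/

section FiniteSets

variable {α : Type*}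

theorem Set.finite_of_forall_finite_subset_ncard_le {T : Set α} {N : ℕ}
    (h : ∀ S ⊆ T, S.Finite → S.ncard ≤ N) : T.Finite := by
  by_contra hT
  obtain ⟨S, hST, hSfin, hS⟩ := Set.Infinite.exists_subset_ncard_eq hT (N + 1)
  have := h S hST hSfin
  omega

theorem Set.nonempty_iInter_of_antitone_of_finite {U : ℕ → Set α} (hU : Antitone U)
    (h0 : (U 0).Finite) (hne : ∀ n, (U n).Nonempty) : (⋂ n, U n).Nonempty := by
  by_contra hempty
  simp only [nonempty_iInter, not_exists, not_forall] at hempty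
  choose f hf using hempty
  classical
  obtain ⟨x, hx⟩ := hne (h0.toFinset.sup f)
  have hx0 : x ∈ h0.toFinset := h0.mem_toFinset.2 (hU (Nat.zero_le _) hx)
  exact hf x (hU (Finset.le_sup hx0) hx)

end FiniteSets

section IsolatedSets

variable {X : Type*} [EMetricSpace X]

def IsIsolatedAt (R : ℝ) (F : Set X) : Prop :=
  ∀ x ∈ F, ∀ y, edist x y ≤ ENNReal.ofReal R → y ∈ F

theorem IsIsolatedAt.anti {R R' : ℝ} (hRR' : R ≤ R') {F : Set X} (hF : IsIsolatedAt R' F) :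
    IsIsolatedAt R F :=
  fun x hx y hxy => hF x hx y (hxy.trans (ENNReal.ofReal_le_ofReal hRR'))

theorem rBoundary_eq_empty_iff {R : ℝ} {F : Set X} : rBoundary R F = ∅ ↔ IsIsolatedAt R F := by
  refine ⟨fun h x hx y hxy => ?_, fun h => eq_empty_of_forall_notMem ?_⟩
  · by_contra hy
    have hxF : x ∈ rBoundary R F := ⟨⟨x, hx, by simp⟩, ⟨y, hy, hxy⟩⟩
    simp [h] at hxF
  · rintro x ⟨⟨y, hy, hxy⟩, ⟨z, hz, hxz⟩⟩
    exact hz (h x (h y hy x (by rwa [edist_comm])) z hxz)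

theorem IsIsolatedAt.isFolnerSet {R ε : ℝ} {F : Set X} (hF : IsIsolatedAt R F)
    (hfin : F.Finite) (hne : F.Nonempty) (hε : 0 ≤ ε) : IsFolnerSet R ε F := by
  refine ⟨hfin, hne, ?_⟩
  rw [rBoundary_eq_empty_iff.2 hF, ncard_empty, Nat.cast_zero]
  positivity

theorem isIsolatedAt_biUnion {ι : Type*} {R : ℝ} {S : Set ι} {F : ι → Set X}
    (h : ∀ i ∈ S, IsIsolatedAt R (F i)) : IsIsolatedAt R (⋃ i ∈ S, F i) := by
  simp only [IsIsolatedAt, mem_iUnion₂]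
  rintro x ⟨i, hi, hx⟩ y hxy
  exact ⟨i, hi, h i hi x hx y hxy⟩

theorem isIsolatedAt_eball_top (R : ℝ) (x : X) : IsIsolatedAt R (Metric.eball x ⊤) :=
  fun y hy z hyz => (edist_triangle_left z x y).trans_lt
    (ENNReal.add_lt_top.2 ⟨hyz.trans_lt ENNReal.ofReal_lt_top, hy⟩)

theorem isIsolatedAt_of_edist_eq_top {Y : Set X} (hY : ∀ x ∈ Y, ∀ y ∉ Y, edist x y = ⊤)
    (R : ℝ) : IsIsolatedAt R Y := by
  intro x hx y hxy
  by_contra hy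
  simp [hY x hx y hy] at hxy

theorem rBoundary_mono {R R' : ℝ} (hRR' : R ≤ R') (F : Set X) :
    rBoundary R F ⊆ rBoundary R' F := by
  rintro x ⟨⟨y, hy, hxy⟩, ⟨z, hz, hxz⟩⟩
  exact ⟨⟨y, hy, hxy.trans (ENNReal.ofReal_le_ofReal hRR')⟩,
    ⟨z, hz, hxz.trans (ENNReal.ofReal_le_ofReal hRR')⟩⟩

theorem rBoundary_union_subset (R : ℝ) (F A : Set X) :
    rBoundary R (F ∪ A) ⊆ rBoundary R F ∪ ⋃ a ∈ A, Metric.closedEBall a (ENNReal.ofReal R) := by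
  rintro x ⟨⟨y, hy | hy, hxy⟩, ⟨z, hz, hxz⟩⟩
  · exact Or.inl ⟨⟨y, hy, hxy⟩, ⟨z, fun h => hz (Or.inl h), hxz⟩⟩
  · exact Or.inr (mem_biUnion hy hxy)

theorem image_val_rBoundary_preimage_subset (Y : Set X) (R : ℝ) (F : Set X) :
    Subtype.val '' rBoundary R ((↑) ⁻¹' F : Set Y) ⊆ rBoundary R F := by
  rintro _ ⟨x, ⟨⟨y, hy, hxy⟩, ⟨z, hz, hxz⟩⟩, rfl⟩
  exact ⟨⟨y, hy, hxy⟩, ⟨z, hz, hxz⟩⟩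

theorem rBoundary_image_val {Y : Set X} {R : ℝ} (hY : IsIsolatedAt R Y) (G : Set Y) :
    rBoundary R (Subtype.val '' G) = Subtype.val '' rBoundary R G := by
  refine Subset.antisymm ?_ (by
    simpa [preimage_image_eq G Subtype.val_injective] using
      image_val_rBoundary_preimage_subset Y R (Subtype.val '' G))
  rintro x ⟨⟨_, ⟨y, hy, rfl⟩, hxy⟩, ⟨z, hz, hxz⟩⟩
  have hxY : x ∈ Y := hY y y.2 x (by rwa [edist_comm])
  have hzY : z ∈ Y := hY x hxY z hxz
  exact ⟨⟨x, hxY⟩, ⟨⟨y, hy, hxy⟩, ⟨⟨z, hzY⟩, fun h => hz ⟨_, h, rfl⟩, hxz⟩⟩, rfl⟩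

theorem IsFolnerSet.image_val {Y : Set X} {R ε : ℝ} (hY : IsIsolatedAt R Y) {G : Set Y}
    (h : IsFolnerSet R ε G) : IsFolnerSet R ε (Subtype.val '' G) := by
  obtain ⟨hfin, hne, hcard⟩ := h
  refine ⟨hfin.image _, hne.image _, ?_⟩
  rwa [rBoundary_image_val hY, ncard_image_of_injective _ Subtype.val_injective,
    ncard_image_of_injective _ Subtype.val_injective]

theorem eball_top_subset_image_val {Y : Set X} (hY : ∀ x ∈ Y, ∀ y ∉ Y, edist x y = ⊤)
    (x : Y) : Metric.eball (x : X) ⊤ ⊆ Subtype.val '' Metric.eball x ⊤ := by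
  intro y hy
  have hyY : y ∈ Y := by
    by_contra hyY
    rw [Metric.mem_eball, edist_comm] at hy
    exact hy.ne (hY x x.2 y hyY)
  exact ⟨⟨y, hyY⟩, hy, rfl⟩

end IsolatedSets

section LocallyFinite

variable {X : Type*} [EMetricSpace X]

theorem LocallyFiniteEMS.finite_closedEBall (hlf : LocallyFiniteEMS X) (x : X) (R : ℝ) :
    (Metric.closedEBall x (ENNReal.ofReal R)).Finite :=
  (hlf x R).subset fun _ hy => Metric.mem_closedEBall'.1 hy

theorem LocallyFiniteEMS.rBoundary_finite (hlf : LocallyFiniteEMS X) {F : Set X}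
    (hF : F.Finite) (R : ℝ) : (rBoundary R F).Finite :=
  (hF.biUnion fun y _ => hlf.finite_closedEBall y R).subset
    fun _ ⟨⟨_, hy, hxy⟩, _⟩ => mem_biUnion hy hxy

theorem LocallyFiniteEMS.subtype (hlf : LocallyFiniteEMS X) (Y : Set X) :
    LocallyFiniteEMS Y :=
  fun x R => (hlf x R).preimage (f := Subtype.val) Subtype.val_injective.injOn

theorem IsFolnerSet.mono (hlf : LocallyFiniteEMS X) {R R' ε ε' : ℝ} (hR : R ≤ R')
    (hε : ε' ≤ ε) {F : Set X} (h : IsFolnerSet R' ε' F) : IsFolnerSet R ε F := by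
  obtain ⟨hfin, hne, hcard⟩ := h
  refine ⟨hfin, hne, ?_⟩
  calc ((rBoundary R F).ncard : ℝ) ≤ (rBoundary R' F).ncard := by
        exact_mod_cast ncard_le_ncard (rBoundary_mono hR F) (hlf.rBoundary_finite hfin R')
    _ ≤ ε' * F.ncard := hcard
    _ ≤ ε * F.ncard := by gcongr

end LocallyFinite

section BoundedFolnerSets

variable {X : Type*} [EMetricSpace X]

theorem exists_ncard_le_of_isFolnerSet_of_not_properlyAmenable (hlf : LocallyFiniteEMS X)
    (h : ¬ ProperlyAmenable X) :
    ∃ R > (0 : ℝ), ∃ ε > (0 : ℝ), ∃ N : ℕ, ∀ F : Set X, IsFolnerSet R ε F → F.ncard ≤ N := by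
  simp only [ProperlyAmenable, not_forall, not_exists, not_and] at h
  obtain ⟨R, hR, ε, hε, A, hA, hnoF⟩ := h
  set B := ⋃ a ∈ A, Metric.closedEBall a (ENNReal.ofReal R)
  have hB : B.Finite := hA.biUnion fun a _ => hlf.finite_closedEBall a R
  refine ⟨R, hR, ε / 2, by positivity, ⌈2 * B.ncard / ε⌉₊, fun F hF => ?_⟩
  by_contra! hlarge
  -- otherwise `F ∪ A` would be an `(R, ε)`-Følner set containing `A`
  refine hnoF (F ∪ A) ⟨hF.1.union hA, hF.2.1.mono subset_union_left, ?_⟩ subset_union_right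
  have hbdry : ((rBoundary R (F ∪ A)).ncard : ℝ) ≤ (rBoundary R F).ncard + B.ncard := by
    exact_mod_cast (ncard_le_ncard (rBoundary_union_subset R F A)
      ((hlf.rBoundary_finite hF.1 R).union hB)).trans (ncard_union_le _ _)
  have hFA : (F.ncard : ℝ) ≤ (F ∪ A).ncard := by
    exact_mod_cast ncard_le_ncard subset_union_left (hF.1.union hA)
  have hB_lt : 2 * (B.ncard : ℝ) / ε < F.ncard :=
    (Nat.le_ceil _).trans_lt (by exact_mod_cast hlarge)
  rw [div_lt_iff₀ hε] at hB_lt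
  have := mul_le_mul_of_nonneg_left hFA hε.le
  linarith [hF.2.2]

def finiteIsolatedPart (R : ℝ) : Set X :=
  {x | ∃ F : Set X, F.Finite ∧ IsIsolatedAt R F ∧ x ∈ F}

theorem finiteIsolatedPart_anti : Antitone (finiteIsolatedPart : ℝ → Set X) :=
  fun _ _ hRR' _ ⟨F, hfin, hiso, hx⟩ => ⟨F, hfin, hiso.anti hRR', hx⟩

variable {R₀ ε : ℝ} {N : ℕ}

theorem ncard_le_of_isIsolatedAt (hbd : ∀ F : Set X, IsFolnerSet R₀ ε F → F.ncard ≤ N)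
    (hε : 0 ≤ ε) {R : ℝ} (hR : R₀ ≤ R) {F : Set X} (hF : IsIsolatedAt R F) (hfin : F.Finite) :
    F.ncard ≤ N := by
  rcases F.eq_empty_or_nonempty with rfl | hne
  · simp
  · exact hbd F ((hF.anti hR).isFolnerSet hfin hne hε)

theorem finite_finiteIsolatedPart (hbd : ∀ F : Set X, IsFolnerSet R₀ ε F → F.ncard ≤ N)
    (hε : 0 ≤ ε) {R : ℝ} (hR : R₀ ≤ R) : (finiteIsolatedPart R : Set X).Finite := by
  refine finite_of_forall_finite_subset_ncard_le (N := N) fun S hS hSfin => ?_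
  choose! F hFfin hFiso hxF using fun x (hx : x ∈ S) => hS hx
  have hU : (⋃ x ∈ S, F x).Finite := hSfin.biUnion hFfin
  exact (ncard_le_ncard (fun _ hx => mem_biUnion hx (hxF _ hx)) hU).trans
    (ncard_le_of_isIsolatedAt hbd hε hR (isIsolatedAt_biUnion hFiso) hU)

theorem finiteIsolatedPart_nonempty (hlf : LocallyFiniteEMS X) (ham : Amenable X)
    (hbd : ∀ F : Set X, IsFolnerSet R₀ ε F → F.ncard ≤ N) (hε : 0 < ε) {R : ℝ} (hR : 0 < R)
    (hR₀R : R₀ ≤ R) : (finiteIsolatedPart R : Set X).Nonempty := by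
  set ε' := min ε (1 / (N + 1))
  have hε' : 0 < ε' := by positivity
  have hε'N : ε' * (N + 1) ≤ 1 := (le_div_iff₀ (by positivity)).1 (min_le_right _ _)
  obtain ⟨F, hF⟩ := ham R hR ε' hε'
  have hFN : (F.ncard : ℝ) ≤ N := by exact_mod_cast hbd F (hF.mono hlf hR₀R (min_le_left _ _))
  -- `ε' |F| < 1`, so the boundary of `F` is empty
  have hbdry : ((rBoundary R F).ncard : ℝ) < 1 := by
    nlinarith [hF.2.2, mul_le_mul_of_nonneg_left hFN hε'.le]
  have hempty : rBoundary R F = ∅ := by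
    rw [← ncard_eq_zero (hlf.rBoundary_finite hF.1 R)]
    exact_mod_cast Nat.lt_one_iff.1 (by exact_mod_cast hbdry)
  obtain ⟨x, hx⟩ := hF.2.1
  exact ⟨x, F, hF.1, rBoundary_eq_empty_iff.1 hempty, hx⟩

theorem exists_finite_eball_top (hlf : LocallyFiniteEMS X) (ham : Amenable X)
    (hbd : ∀ F : Set X, IsFolnerSet R₀ ε F → F.ncard ≤ N) (hR₀ : 0 < R₀) (hε : 0 < ε) :
    ∃ x : X, (Metric.eball x ⊤).Finite := by
  have hR (n : ℕ) : R₀ ≤ R₀ + n := le_add_of_nonneg_right n.cast_nonneg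
  obtain ⟨x, hx⟩ := nonempty_iInter_of_antitone_of_finite
    (finiteIsolatedPart_anti.comp_monotone fun m n h => by gcongr)
    (finite_finiteIsolatedPart hbd hε.le (hR 0))
    (fun n => finiteIsolatedPart_nonempty hlf ham hbd hε (hR₀.trans_le (hR n)) (hR n))
  simp only [mem_iInter, Function.comp_apply] at hx
  refine ⟨x, finite_of_forall_finite_subset_ncard_le (N := N) fun S hS hSfin => ?_⟩
  obtain ⟨m, hm⟩ : ∃ m : ℕ, ∀ y ∈ S, edist y x ≤ m := by
    choose! n hn using fun y (hy : y ∈ S) => ENNReal.exists_nat_gt (hS hy).ne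
    obtain ⟨m, hm⟩ := (hSfin.image n).bddAbove
    exact ⟨m, fun y hy => (hn y hy).le.trans (by exact_mod_cast hm (mem_image_of_mem n hy))⟩
  obtain ⟨F, hFfin, hFiso, hxF⟩ := hx m
  have hSF : S ⊆ F := fun y hy => hFiso x hxF y <| by
    rw [edist_comm]
    refine (hm y hy).trans ?_
    rw [← ENNReal.ofReal_natCast]
    exact ENNReal.ofReal_le_ofReal (le_add_of_nonneg_left hR₀.le)
  exact (ncard_le_ncard hSF hFfin).trans (ncard_le_of_isIsolatedAt hbd hε.le (hR m) hFiso hFfin)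

end BoundedFolnerSets

section Decomposition

variable {X : Type*} [EMetricSpace X]

theorem exists_decomposition_of_amenable_of_not_properlyAmenable (hlf : LocallyFiniteEMS X)
    (ham : Amenable X) (hnpa : ¬ ProperlyAmenable X) :
    ∃ Y₁ Y₂ : Set X, Y₁ ∪ Y₂ = Set.univ ∧ Disjoint Y₁ Y₂ ∧
      Y₁.Finite ∧ Y₁.Nonempty ∧ ¬ Amenable ↥Y₂ ∧
      ∀ x ∈ Y₁, ∀ y ∈ Y₂, edist x y = ⊤ := by
  obtain ⟨R₀, hR₀, ε, hε, N, hbd⟩ :=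
    exists_ncard_le_of_isFolnerSet_of_not_properlyAmenable hlf hnpa
  set Y₁ := {x : X | (Metric.eball x ⊤).Finite}
  have hsep : ∀ x ∈ Y₁, ∀ y ∉ Y₁, edist x y = ⊤ := fun x hx y hy => by
    by_contra hxy
    exact hy (hx.subset (Metric.eball_subset (by simp) (by rwa [edist_comm])))
  have hsepc : ∀ x ∈ Y₁ᶜ, ∀ y ∉ Y₁ᶜ, edist x y = ⊤ := fun x hx y hy => by
    rw [edist_comm]
    exact hsep y (not_not.1 hy) x hx
  refine ⟨Y₁, Y₁ᶜ, union_compl_self _, disjoint_compl_right, ?_,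
    exists_finite_eball_top hlf ham hbd hR₀ hε, fun ham₂ => ?_, hsep⟩
  · exact (finite_finiteIsolatedPart hbd hε.le le_rfl).subset fun x hx =>
      ⟨_, hx, isIsolatedAt_eball_top R₀ x, Metric.mem_eball_self ENNReal.zero_lt_top⟩
  · -- Følner sets of `Y₁ᶜ` are Følner sets of `X`, so they obey the same bound
    have hbd₂ : ∀ G : Set ↥Y₁ᶜ, IsFolnerSet R₀ ε G → G.ncard ≤ N := fun G hG => by
      simpa [ncard_image_of_injective _ Subtype.val_injective] using
        hbd _ (hG.image_val (isIsolatedAt_of_edist_eq_top hsepc R₀))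
    obtain ⟨x, hx⟩ := exists_finite_eball_top (hlf.subtype _) ham₂ hbd₂ hR₀ hε
    exact x.2 ((hx.image Subtype.val).subset (eball_top_subset_image_val hsepc x))

theorem ProperlyAmenable.amenable_compl (hlf : LocallyFiniteEMS X) (h : ProperlyAmenable X)
    {Y : Set X} (hY : Y.Finite) (hYc : Yᶜ.Nonempty) : Amenable ↥Yᶜ := by
  intro R hR ε hε
  obtain ⟨z, hz⟩ := hYc
  set k := Y.ncard
  obtain ⟨F, ⟨hFfin, -, hFbdry⟩, hYF⟩ :=
    h R hR (ε / (k + 1)) (by positivity) (insert z Y) (hY.insert z)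
  set G : Set ↥Yᶜ := Subtype.val ⁻¹' F
  have hGfin : G.Finite := hFfin.preimage Subtype.val_injective.injOn
  have hG : G.Nonempty := ⟨⟨z, hz⟩, hYF (mem_insert z Y)⟩
  refine ⟨G, hGfin, hG, ?_⟩
  have hbdry : ((rBoundary R G).ncard : ℝ) ≤ (rBoundary R F).ncard := by
    rw [← ncard_image_of_injective _ Subtype.val_injective]
    exact_mod_cast ncard_le_ncard (image_val_rBoundary_preimage_subset Yᶜ R F)
      (hlf.rBoundary_finite hFfin R)
  have hFG : (F.ncard : ℝ) ≤ (k + 1) * G.ncard := by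
    have hsplit : F ⊆ Y ∪ Subtype.val '' G := fun x hx =>
      (em (x ∈ Y)).elim Or.inl fun hxY => Or.inr ⟨⟨x, hxY⟩, hx, rfl⟩
    have hF : (F.ncard : ℝ) ≤ k + G.ncard := by
      rw [← ncard_image_of_injective G Subtype.val_injective]
      exact_mod_cast (ncard_le_ncard hsplit (hY.union (hGfin.image _))).trans
        (ncard_union_le _ _)
    have hG1 : (1 : ℝ) ≤ G.ncard := by exact_mod_cast (ncard_pos hGfin).2 hG
    nlinarith
  calc ((rBoundary R G).ncard : ℝ) ≤ ε / (k + 1) * F.ncard := hbdry.trans hFbdry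
    _ ≤ ε / (k + 1) * ((k + 1) * G.ncard) := by gcongr
    _ = ε * G.ncard := by field_simp

end Decomposition

theorem stmt6 {X : Type*} [EMetricSpace X] [Infinite X] (hlf : LocallyFiniteEMS X) :
    (Amenable X ∧ ¬ ProperlyAmenable X) ↔
      ∃ Y₁ Y₂ : Set X, Y₁ ∪ Y₂ = Set.univ ∧ Disjoint Y₁ Y₂ ∧
        Y₁.Finite ∧ Y₁.Nonempty ∧ ¬ Amenable ↥Y₂ ∧
        ∀ x ∈ Y₁, ∀ y ∈ Y₂, edist x y = ⊤ := by
  refine ⟨fun ⟨ham, hnpa⟩ => exists_decomposition_of_amenable_of_not_properlyAmenable hlf ham hnpa,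
    ?_⟩
  rintro ⟨Y₁, Y₂, hunion, hdisj, hY₁fin, hY₁ne, hY₂, hsep⟩
  obtain rfl : Y₁ᶜ = Y₂ := IsCompl.compl_eq ⟨hdisj, codisjoint_iff.2 hunion⟩
  have hY₁iso (R : ℝ) : IsIsolatedAt R Y₁ := isIsolatedAt_of_edist_eq_top hsep R
  exact ⟨fun R _ ε hε => ⟨Y₁, (hY₁iso R).isFolnerSet hY₁fin hY₁ne hε.le⟩,
    fun hpa => hY₂ (hpa.amenable_compl hlf hY₁fin hY₁fin.infinite_compl.nonempty)⟩
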